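/- arXiv:2209.15607 — 2 statements merged into one kernel-verified Lean document; each statement's English description precedes it below -/
import Mathlib

section
/- Let μ be a centered, compactly supported Borel probability measure on ℝ that is not a Dirac mass, μ̂ a Nevanlinna measure for μ, t > 1, and ω_t a subordination function for μ at time t. If ω₀ ∈ ℂ⁺ satisfies I_{μ̂}(ω₀) < 1/(t − 1), then the point z₀ := ω₀ − (t − 1)·∫_ℝ (x − ω₀)⁻¹ dμ̂(x) lies in ℂ⁺ and ω_t(z₀) = ω₀; in particular every ω₀ ∈ ℂ⁺ with I_{μ̂}(ω₀) < 1/(t − 1) is in the range of ω_t. -/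
open MeasureTheory Complex Set Filter Topology

noncomputable section

/-- Cauchy–Stieltjes transform `m_μ(z) = ∫ (x − z)⁻¹ dμ(x)`. -/
def mTr (μ : Measure ℝ) (z : ℂ) : ℂ := ∫ x, ((x : ℂ) - z)⁻¹ ∂μ

/-- Negative reciprocal Cauchy–Stieltjes transform `F_μ(z) = −1/m_μ(z)`. -/
def FTr (μ : Measure ℝ) (z : ℂ) : ℂ := -(mTr μ z)⁻¹

/-- `I_ν(ω) = ∫ |x − ω|⁻² dν(x)`. -/
def Inu (ν : Measure ℝ) (ω : ℂ) : ℝ := ∫ x, (Complex.normSq ((x : ℂ) - ω))⁻¹ ∂ν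

/-- Topological support of a Borel measure on ℝ. -/
def msupport (μ : Measure ℝ) : Set ℝ := {x | ∀ U : Set ℝ, IsOpen U → x ∈ U → 0 < μ U}

/-- `μh` is a Nevanlinna measure for the (centered) measure `μ`:
a finite Borel measure with `F_μ(ω) − ω = ∫ (x − ω)⁻¹ dμh(x)` on ℂ⁺. -/
def IsNevanlinna (μ μh : Measure ℝ) : Prop :=
  IsFiniteMeasure μh ∧ ∀ ω : ℂ, 0 < ω.im → FTr μ ω - ω = ∫ x, ((x : ℂ) - ω)⁻¹ ∂μh

/-- Subordination function for `μ` at time `t`. -/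
structure IsSubordination (μ : Measure ℝ) (t : ℝ) (ω : ℂ → ℂ) : Prop where
  contOn : ContinuousOn ω {z : ℂ | 0 ≤ z.im}
  mapsTo : ∀ z : ℂ, 0 ≤ z.im → 0 ≤ (ω z).im
  diff : DifferentiableOn ℂ ω {z : ℂ | 0 < z.im}
  im_ge : ∀ z : ℂ, 0 < z.im → z.im ≤ (ω z).im
  subord : ∀ z : ℂ, 0 < z.im → (t : ℂ) * ω z - z = ((t - 1 : ℝ) : ℂ) * FTr μ (ω z)

/-- `ν = μ^{⊞t}`, the free convolution power associated with the subordination function `ω`. -/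
def IsFreePower (μ : Measure ℝ) (t : ℝ) (ω : ℂ → ℂ) (ν : Measure ℝ) : Prop :=
  IsProbabilityMeasure ν ∧ ∀ z : ℂ, 0 < z.im → mTr ν z = mTr μ (ω z)

/-- Subordination functions for the pair `(μa, μb)`. -/
structure IsPairSubordination (μa μb : Measure ℝ) (ωa ωb : ℂ → ℂ) : Prop where
  diff_a : DifferentiableOn ℂ ωa {z : ℂ | 0 < z.im}
  diff_b : DifferentiableOn ℂ ωb {z : ℂ | 0 < z.im}
  im_a : ∀ z : ℂ, 0 < z.im → z.im ≤ (ωa z).im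
  im_b : ∀ z : ℂ, 0 < z.im → z.im ≤ (ωb z).im
  lim_a : Tendsto (fun η : ℝ => ωa (η * Complex.I) / (η * Complex.I)) atTop (nhds 1)
  lim_b : Tendsto (fun η : ℝ => ωb (η * Complex.I) / (η * Complex.I)) atTop (nhds 1)
  eq_a : ∀ z : ℂ, 0 < z.im → ωa z + ωb z - z = FTr μa (ωb z)
  eq_b : ∀ z : ℂ, 0 < z.im → ωa z + ωb z - z = FTr μb (ωa z)

/-- `ν = μa ⊞ μb`, the free additive convolution. -/
def IsFreeConv (μa μb : Measure ℝ) (ωb : ℂ → ℂ) (ν : Measure ℝ) : Prop :=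
  IsProbabilityMeasure ν ∧ ∀ z : ℂ, 0 < z.im → mTr ν z = mTr μa (ωb z)

/-- Assumption 1 of the paper: `μ` is a centered, compactly supported probability
measure whose singular part consists of finitely many atoms and whose absolutely
continuous part has a density `ρ` of Jacobi type, supported on finitely many
disjoint compact intervals with power-law behavior (exponents in `(−1,1)`). -/
structure JacobiData (μ : Measure ℝ) where
  ρ : ℝ → ℝ
  n : ℕ
  npos : 0 < n
  Em : Fin n → ℝ
  Ep : Fin n → ℝ
  βm : Fin n → ℝ
  βp : Fin n → ℝ
  Cj : Fin n → ℝ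
  atoms : Finset ℝ
  w : ℝ → ℝ
  prob : IsProbabilityMeasure μ
  compactSupp : ∃ K : Set ℝ, IsCompact K ∧ μ Kᶜ = 0
  centered : ∫ x, x ∂μ = 0
  lt : ∀ j, Em j < Ep j
  disj : ∀ i j, i ≠ j → Disjoint (Set.Icc (Em i) (Ep i)) (Set.Icc (Em j) (Ep j))
  βm_mem : ∀ j, βm j ∈ Set.Ioo (-1 : ℝ) 1
  βp_mem : ∀ j, βp j ∈ Set.Ioo (-1 : ℝ) 1
  Cj_ge : ∀ j, 1 ≤ Cj j
  ρ_nonneg : ∀ x, 0 ≤ ρ x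
  ρ_supp : ∀ x, x ∉ ⋃ j, Set.Icc (Em j) (Ep j) → ρ x = 0
  powerLaw : ∀ j, ∀ᵐ E ∂(volume.restrict (Set.Icc (Em j) (Ep j))),
      (Cj j)⁻¹ * ((E - Em j) ^ (βm j) * (Ep j - E) ^ (βp j)) ≤ ρ E ∧
      ρ E ≤ Cj j * ((E - Em j) ^ (βm j) * (Ep j - E) ^ (βp j))
  w_nonneg : ∀ a, 0 ≤ w a
  decomp : μ = volume.withDensity (fun x => ENNReal.ofReal (ρ x))
      + ∑ a ∈ atoms, ENNReal.ofReal (w a) • Measure.dirac a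

/-- The support of the absolutely continuous part of `μ`. -/
def JacobiData.acSupport {μ : Measure ℝ} (d : JacobiData μ) : Set ℝ :=
  ⋃ j, Set.Icc (d.Em j) (d.Ep j)

/-- The Hölder condition (5.1)/(2.8) of the paper on the density of `μ_ac`. -/
def JacobiData.HolderCond {μ : Measure ℝ} (d : JacobiData μ) : Prop :=
  ∀ j, ∃ L γ : NNReal, 0 < γ ∧
    HolderOnWith L γ
      (fun E => d.ρ E / ((E - d.Em j) ^ (d.βm j) * (d.Ep j - E) ^ (d.βp j)))
      (Set.Icc (d.Em j) (d.Ep j))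

/-- Assumption 2 of the paper: a centered, absolutely continuous probability measure
supported on finitely many disjoint compact intervals, with density of Jacobi type. -/
structure AbsJacobiData (μ : Measure ℝ) where
  ρ : ℝ → ℝ
  n : ℕ
  npos : 0 < n
  Am : Fin n → ℝ
  Ap : Fin n → ℝ
  sm : Fin n → ℝ
  sp : Fin n → ℝ
  Cj : Fin n → ℝ
  prob : IsProbabilityMeasure μ
  centered : ∫ x, x ∂μ = 0
  lt : ∀ j, Am j < Ap j
  disj : ∀ i j, i ≠ j → Disjoint (Set.Icc (Am i) (Ap i)) (Set.Icc (Am j) (Ap j))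
  sm_mem : ∀ j, sm j ∈ Set.Ioo (-1 : ℝ) 1
  sp_mem : ∀ j, sp j ∈ Set.Ioo (-1 : ℝ) 1
  Cj_ge : ∀ j, 1 ≤ Cj j
  ρ_nonneg : ∀ x, 0 ≤ ρ x
  ρ_supp : ∀ x, x ∉ ⋃ j, Set.Icc (Am j) (Ap j) → ρ x = 0
  powerLaw : ∀ j, ∀ᵐ E ∂(volume.restrict (Set.Icc (Am j) (Ap j))),
      (Cj j)⁻¹ * ((E - Am j) ^ (sm j) * (Ap j - E) ^ (sp j)) ≤ ρ E ∧
      ρ E ≤ Cj j * ((E - Am j) ^ (sm j) * (Ap j - E) ^ (sp j))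
  decomp : μ = volume.withDensity (fun x => ENNReal.ofReal (ρ x))

/-! The point `z₀` is the image of `ω₀` under `ω ↦ ω − (t − 1)·h(ω)`, where
`h(ω) = ∫ (x − ω)⁻¹ dμ̂(x)`, and the subordination equation says that this map sends `ω_t(z)` back
to `z`. By the resolvent identity, `h(ω) − h(ω') = (ω − ω')·∫ (x − ω)⁻¹(x − ω')⁻¹ dμ̂`, and by
AM–GM the last integral has modulus at most `(I(ω) + I(ω'))/2`; hence the map is injective on the
region `(t − 1)·I < 1`. Its imaginary part is `Im ω·(1 − (t − 1)·I(ω))`, so both `ω₀` and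
`ω_t(z₀)` lie in that region, and they have the same image `z₀`. -/

section CauchyTransform

variable {ν : Measure ℝ} {ω ω' : ℂ}

lemma ofReal_sub_ne_zero (x : ℝ) (hω : 0 < ω.im) : (x : ℂ) - ω ≠ 0 := by
  intro h
  have := congrArg Complex.im h
  simp only [sub_im, ofReal_im, zero_im, zero_sub, neg_eq_zero] at this
  exact hω.ne' this

lemma norm_inv_ofReal_sub_le (x : ℝ) (hω : 0 < ω.im) : ‖((x : ℂ) - ω)⁻¹‖ ≤ ω.im⁻¹ := by
  rw [norm_inv]
  refine inv_anti₀ hω ?_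
  calc ω.im = |((x : ℂ) - ω).im| := by simp [abs_of_pos hω]
    _ ≤ ‖(x : ℂ) - ω‖ := abs_im_le_norm _

lemma continuous_inv_ofReal_sub (hω : 0 < ω.im) : Continuous fun x : ℝ ↦ ((x : ℂ) - ω)⁻¹ :=
  (continuous_ofReal.sub continuous_const).inv₀ fun x ↦ ofReal_sub_ne_zero x hω

lemma inv_normSq_ofReal_sub (x : ℝ) : (normSq ((x : ℂ) - ω))⁻¹ = ‖((x : ℂ) - ω)⁻¹‖ ^ 2 := by
  rw [← normSq_inv, normSq_eq_norm_sq]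

lemma Inu_nonneg (ν : Measure ℝ) (ω : ℂ) : 0 ≤ Inu ν ω :=
  integral_nonneg fun _ ↦ inv_nonneg.mpr (normSq_nonneg _)

variable [IsFiniteMeasure ν]

lemma integrable_inv_ofReal_sub (hω : 0 < ω.im) : Integrable (fun x : ℝ ↦ ((x : ℂ) - ω)⁻¹) ν :=
  .of_bound (continuous_inv_ofReal_sub hω).aestronglyMeasurable _
    (.of_forall fun x ↦ norm_inv_ofReal_sub_le x hω)

lemma integrable_inv_ofReal_sub_mul_inv_ofReal_sub (hω : 0 < ω.im) (hω' : 0 < ω'.im) :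
    Integrable (fun x : ℝ ↦ ((x : ℂ) - ω)⁻¹ * ((x : ℂ) - ω')⁻¹) ν :=
  (integrable_inv_ofReal_sub hω').bdd_mul (continuous_inv_ofReal_sub hω).aestronglyMeasurable
    (.of_forall fun x ↦ norm_inv_ofReal_sub_le x hω)

lemma integrable_inv_normSq_ofReal_sub (hω : 0 < ω.im) :
    Integrable (fun x : ℝ ↦ (normSq ((x : ℂ) - ω))⁻¹) ν := by
  simp_rw [inv_normSq_ofReal_sub, sq]
  exact (integrable_inv_ofReal_sub hω).norm.mul_bdd
    (continuous_inv_ofReal_sub hω).norm.aestronglyMeasurable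
    (.of_forall fun x ↦ by simpa using norm_inv_ofReal_sub_le x hω)

lemma im_integral_inv_ofReal_sub (hω : 0 < ω.im) :
    (∫ x, ((x : ℂ) - ω)⁻¹ ∂ν).im = ω.im * Inu ν ω := by
  rw [← RCLike.im_eq_complex_im, ← integral_im (integrable_inv_ofReal_sub hω), Inu,
    ← integral_const_mul]
  congr 1 with x
  simp [div_eq_mul_inv]

lemma integral_inv_ofReal_sub_sub_integral_inv_ofReal_sub (hω : 0 < ω.im) (hω' : 0 < ω'.im) :
    ∫ x, ((x : ℂ) - ω)⁻¹ ∂ν - ∫ x, ((x : ℂ) - ω')⁻¹ ∂ν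
      = (ω - ω') * ∫ x, ((x : ℂ) - ω)⁻¹ * ((x : ℂ) - ω')⁻¹ ∂ν := by
  rw [← integral_sub (integrable_inv_ofReal_sub hω) (integrable_inv_ofReal_sub hω'),
    ← integral_const_mul]
  congr 1 with x
  have := ofReal_sub_ne_zero x hω
  have := ofReal_sub_ne_zero x hω'
  field_simp
  ring

lemma norm_integral_inv_ofReal_sub_mul_inv_ofReal_sub_le (hω : 0 < ω.im) (hω' : 0 < ω'.im) :
    ‖∫ x, ((x : ℂ) - ω)⁻¹ * ((x : ℂ) - ω')⁻¹ ∂ν‖ ≤ (Inu ν ω + Inu ν ω') / 2 := by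
  calc ‖∫ x, ((x : ℂ) - ω)⁻¹ * ((x : ℂ) - ω')⁻¹ ∂ν‖
      ≤ ∫ x, ‖((x : ℂ) - ω)⁻¹ * ((x : ℂ) - ω')⁻¹‖ ∂ν := norm_integral_le_integral_norm _
    _ ≤ ∫ x, ((normSq ((x : ℂ) - ω))⁻¹ + (normSq ((x : ℂ) - ω'))⁻¹) / 2 ∂ν := by
        refine integral_mono (integrable_inv_ofReal_sub_mul_inv_ofReal_sub hω hω').norm
          (((integrable_inv_normSq_ofReal_sub hω).add
            (integrable_inv_normSq_ofReal_sub hω')).div_const 2) fun x ↦ ?_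
        simp only [norm_mul, inv_normSq_ofReal_sub]
        linarith [two_mul_le_add_sq ‖((x : ℂ) - ω)⁻¹‖ ‖((x : ℂ) - ω')⁻¹‖]
    _ = (Inu ν ω + Inu ν ω') / 2 := by
        rw [integral_div, integral_add (integrable_inv_normSq_ofReal_sub hω)
          (integrable_inv_normSq_ofReal_sub hω'), Inu, Inu]

lemma im_sub_mul_integral_inv_ofReal_sub (c : ℝ) (hω : 0 < ω.im) :
    (ω - c * ∫ x, ((x : ℂ) - ω)⁻¹ ∂ν).im = ω.im * (1 - c * Inu ν ω) := by
  rw [sub_im, im_ofReal_mul, im_integral_inv_ofReal_sub hω]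
  ring

lemma injOn_sub_mul_integral_inv_ofReal_sub {c : ℝ} (hc : 0 ≤ c) :
    InjOn (fun ω ↦ ω - c * ∫ x, ((x : ℂ) - ω)⁻¹ ∂ν) {ω | 0 < ω.im ∧ c * Inu ν ω < 1} := by
  rintro ω ⟨hω, hIω⟩ ω' ⟨hω', hIω'⟩ heq
  by_contra hne
  have hres := integral_inv_ofReal_sub_sub_integral_inv_ofReal_sub (ν := ν) hω hω'
  set G := ∫ x, ((x : ℂ) - ω)⁻¹ * ((x : ℂ) - ω')⁻¹ ∂ν
  have hcG : (c : ℂ) * G = 1 := by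
    have : (ω - ω') * (1 - c * G) = 0 := by
      simp only at heq
      linear_combination heq + (c : ℂ) * hres
    linear_combination -(mul_eq_zero.mp this).resolve_left (sub_ne_zero.mpr hne)
  have hnorm : c * ‖G‖ = 1 := by
    simpa [norm_mul, abs_of_nonneg hc] using congrArg norm hcG
  have hG := norm_integral_inv_ofReal_sub_mul_inv_ofReal_sub_le (ν := ν) hω hω'
  nlinarith [mul_le_mul_of_nonneg_left hG hc]

end CauchyTransform

lemma IsSubordination.sub_mul_integral_inv_ofReal_sub {μ μh : Measure ℝ} {t : ℝ} {ωt : ℂ → ℂ}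
    (hsub : IsSubordination μ t ωt) (hNev : IsNevanlinna μ μh) {z : ℂ} (hz : 0 < z.im) :
    ωt z - ((t - 1 : ℝ) : ℂ) * ∫ x, ((x : ℂ) - ωt z)⁻¹ ∂μh = z := by
  rw [← hNev.2 _ (hz.trans_le (hsub.im_ge z hz))]
  have := hsub.subord z hz
  push_cast at this ⊢
  linear_combination this

theorem statement4_general (μ : Measure ℝ)
    (μh : Measure ℝ) (hNev : IsNevanlinna μ μh)
    (t : ℝ) (ht : 1 < t)
    (ωt : ℂ → ℂ) (hsub : IsSubordination μ t ωt)
    (ω0 : ℂ) (him : 0 < ω0.im) (hI : Inu μh ω0 < 1 / (t - 1)) :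
    0 < (ω0 - ((t - 1 : ℝ) : ℂ) * ∫ x, ((x : ℂ) - ω0)⁻¹ ∂μh).im ∧
      ωt (ω0 - ((t - 1 : ℝ) : ℂ) * ∫ x, ((x : ℂ) - ω0)⁻¹ ∂μh) = ω0 := by
  have := hNev.1
  have hc : 0 < t - 1 := sub_pos.mpr ht
  have hI0 : (t - 1) * Inu μh ω0 < 1 := by rwa [lt_div_iff₀ hc, mul_comm] at hI
  set z0 := ω0 - ((t - 1 : ℝ) : ℂ) * ∫ x, ((x : ℂ) - ω0)⁻¹ ∂μh
  have hz0 : 0 < z0.im := by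
    rw [im_sub_mul_integral_inv_ofReal_sub _ him]
    exact mul_pos him (sub_pos.mpr hI0)
  refine ⟨hz0, ?_⟩
  have hω1 : 0 < (ωt z0).im := hz0.trans_le (hsub.im_ge z0 hz0)
  have himage := hsub.sub_mul_integral_inv_ofReal_sub hNev hz0
  have hI1 : (t - 1) * Inu μh (ωt z0) < 1 := by
    have := im_sub_mul_integral_inv_ofReal_sub (ν := μh) (t - 1) hω1
    rw [himage] at this
    nlinarith
  exact injOn_sub_mul_integral_inv_ofReal_sub hc.le ⟨hω1, hI1⟩ ⟨him, hI0⟩ himage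

/-- any `ω₀ ∈ ℂ⁺` with `I_{μ̂}(ω₀) < 1/(t−1)` is in the range of `ω_t`;
more precisely `z₀ := ω₀ − (t−1)·∫ (x−ω₀)⁻¹ dμ̂` lies in ℂ⁺ and `ω_t(z₀) = ω₀`. -/
theorem statement4 (μ : Measure ℝ) (hprob : IsProbabilityMeasure μ)
    (hcpt : ∃ K : Set ℝ, IsCompact K ∧ μ Kᶜ = 0)
    (hcent : ∫ x, x ∂μ = 0)
    (hnd : ∀ a : ℝ, μ ≠ Measure.dirac a)
    (μh : Measure ℝ) (hNev : IsNevanlinna μ μh)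
    (t : ℝ) (ht : 1 < t)
    (ωt : ℂ → ℂ) (hsub : IsSubordination μ t ωt)
    (ω0 : ℂ) (him : 0 < ω0.im) (hI : Inu μh ω0 < 1 / (t - 1)) :
    0 < (ω0 - ((t - 1 : ℝ) : ℂ) * ∫ x, ((x : ℂ) - ω0)⁻¹ ∂μh).im ∧
      ωt (ω0 - ((t - 1 : ℝ) : ℂ) * ∫ x, ((x : ℂ) - ω0)⁻¹ ∂μh) = ω0 :=
  statement4_general μ μh hNev t ht ωt hsub ω0 him hI

end
end

section
/- Let ν and λ be finite Borel measures on ℝ whose supports each contain at least two points, and let u, v ∈ ℝ with u ∉ supp ν and v ∉ supp λ. For k = 2, 3, 4 set a_k := ∫_ℝ (x − u)^{−k} dν(x) and b_k := ∫_ℝ (x − v)^{−k} dλ(x). Assume a₂·b₂ = 1 and (1 + a₂)²·b₃ + b₂·(1 + b₂)²·a₃ = 0. Then 2·(1 + a₂)⁴·b₃² < b₂·((1 + a₂)⁴·b₄ + (1 + b₂)⁴·a₄). (This expresses that the third derivative z'''(ω_β⁰) of the local inverse of the subordination function is strictly negative whenever its first and second derivatives vanish.) -/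
open MeasureTheory Complex Set Filter Topology

noncomputable section

/-!
Write `t(x) = (x - u)⁻¹`, so that `a_k = ∫ t^k dν`. Since `u` lies outside the support, `t` is
bounded `ν`-a.e., and since the support has two points, `t²` is not a.e. a multiple of `t`; strict
Cauchy–Schwarz for `t` and `t²` gives `a₃² < a₂ a₄`, and likewise `b₃² < b₂ b₄`. Squaring the
second hypothesis turns `(1 + a₂)⁴ b₃²` into `b₂² (1 + b₂)⁴ a₃²`, and `a₂ b₂ = 1` lets the two
Cauchy–Schwarz inequalities be added into the claim.
-/

section StrictCauchySchwarz

variable {α : Type*} [MeasurableSpace α] {μ : Measure α}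

theorem sq_integral_mul_lt_of_forall_not_ae_eq_const_mul {f g : α → ℝ}
    (hff : Integrable (fun x => f x ^ 2) μ) (hgg : Integrable (fun x => g x ^ 2) μ)
    (hfg : Integrable (fun x => f x * g x) μ) (hf : 0 < ∫ x, f x ^ 2 ∂μ)
    (hg : ∀ c : ℝ, ¬ g =ᵐ[μ] fun x => c * f x) :
    (∫ x, f x * g x ∂μ) ^ 2 < (∫ x, f x ^ 2 ∂μ) * ∫ x, g x ^ 2 ∂μ := by
  set A := ∫ x, f x ^ 2 ∂μ
  set B := ∫ x, f x * g x ∂μ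
  have hexpand : ∀ x, (A * g x - B * f x) ^ 2 =
      A ^ 2 * g x ^ 2 - 2 * A * B * (f x * g x) + B ^ 2 * f x ^ 2 := fun x => by ring
  have hgg' : Integrable (fun x => A ^ 2 * g x ^ 2) μ := hgg.const_mul _
  have hfg' : Integrable (fun x => 2 * A * B * (f x * g x)) μ := hfg.const_mul _
  have hff' : Integrable (fun x => B ^ 2 * f x ^ 2) μ := hff.const_mul _
  have hint : Integrable (fun x => (A * g x - B * f x) ^ 2) μ := by
    simp_rw [hexpand]
    exact (hgg'.sub hfg').add hff'
  have hval : ∫ x, (A * g x - B * f x) ^ 2 ∂μ = A * (A * ∫ x, g x ^ 2 ∂μ - B ^ 2) := by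
    simp_rw [hexpand]
    rw [integral_add (f := fun x => A ^ 2 * g x ^ 2 - 2 * A * B * (f x * g x)) (hgg'.sub hfg')
      hff', integral_sub hgg' hfg', integral_const_mul, integral_const_mul, integral_const_mul]
    ring
  have hpos : 0 < ∫ x, (A * g x - B * f x) ^ 2 ∂μ := by
    refine (integral_nonneg fun x => sq_nonneg _).lt_of_ne fun h => hg (B / A) ?_
    filter_upwards [(integral_eq_zero_iff_of_nonneg (fun x => sq_nonneg _) hint).1 h.symm]
      with x hx
    rw [div_mul_eq_mul_div, eq_div_iff hf.ne', mul_comm]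
    simpa [sub_eq_zero] using hx
  rw [hval] at hpos
  linarith [(mul_pos_iff_of_pos_left hf).1 hpos]

end StrictCauchySchwarz

section InverseMoments

variable {ν : Measure ℝ} {u : ℝ}

theorem exists_pos_ae_le_abs_sub_of_notMem_msupport (hu : u ∉ msupport ν) :
    ∃ δ > 0, ∀ᵐ x ∂ν, δ ≤ |x - u| := by
  simp only [msupport, Set.mem_ofPred_eq, not_forall, not_lt, nonpos_iff_eq_zero] at hu
  obtain ⟨U, hUopen, huU, hUnull⟩ := hu
  obtain ⟨δ, hδ, hball⟩ := Metric.isOpen_iff.1 hUopen u huU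
  refine ⟨δ, hδ, measure_mono_null (fun x hx => hball ?_) hUnull⟩
  simpa [Metric.mem_ball, Real.dist_eq] using hx

theorem not_ae_eq_const_of_mem_msupport {x y : ℝ} (hx : x ∈ msupport ν) (hy : y ∈ msupport ν)
    (hxy : x ≠ y) (c : ℝ) : ¬ ∀ᵐ z ∂ν, z = c := by
  intro hc
  have hnull : ν {c}ᶜ = 0 := ae_iff.1 hc
  obtain hxc | hyc : x ≠ c ∨ y ≠ c := by
    by_contra! h
    exact hxy (h.1.trans h.2.symm)
  · exact (hx _ isOpen_compl_singleton hxc).ne' hnull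
  · exact (hy _ isOpen_compl_singleton hyc).ne' hnull

theorem integrable_inv_sub_pow [IsFiniteMeasure ν] (hu : u ∉ msupport ν) (k : ℕ) :
    Integrable (fun x => ((x - u) ^ k)⁻¹) ν := by
  obtain ⟨δ, hδ, hae⟩ := exists_pos_ae_le_abs_sub_of_notMem_msupport hu
  refine (integrable_const (δ ^ k)⁻¹).mono'
    ((measurable_id.sub_const u).pow_const k).inv.aestronglyMeasurable ?_
  filter_upwards [hae] with x hx
  rw [norm_inv, norm_pow, Real.norm_eq_abs]
  gcongr

variable [IsFiniteMeasure ν]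

theorem integral_inv_sub_sq_pos (hsupp : ∃ x ∈ msupport ν, ∃ y ∈ msupport ν, x ≠ y)
    (hu : u ∉ msupport ν) : 0 < ∫ x, ((x - u) ^ 2)⁻¹ ∂ν := by
  obtain ⟨x, hx, y, hy, hxy⟩ := hsupp
  refine (integral_nonneg fun z => by positivity).lt_of_ne fun h => ?_
  refine not_ae_eq_const_of_mem_msupport hx hy hxy u ?_
  filter_upwards [(integral_eq_zero_iff_of_nonneg (fun z => by positivity)
    (integrable_inv_sub_pow hu 2)).1 h.symm] with z hz
  simpa [sub_eq_zero] using hz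

theorem sq_integral_inv_sub_pow_three_lt (hsupp : ∃ x ∈ msupport ν, ∃ y ∈ msupport ν, x ≠ y)
    (hu : u ∉ msupport ν) :
    (∫ x, ((x - u) ^ 3)⁻¹ ∂ν) ^ 2 < (∫ x, ((x - u) ^ 2)⁻¹ ∂ν) * ∫ x, ((x - u) ^ 4)⁻¹ ∂ν := by
  have hsq : ∀ x : ℝ, (x - u)⁻¹ ^ 2 = ((x - u) ^ 2)⁻¹ := fun x => inv_pow _ _
  have hfourth : ∀ x : ℝ, ((x - u) ^ 2)⁻¹ ^ 2 = ((x - u) ^ 4)⁻¹ := fun x => by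
    rw [inv_pow, ← pow_mul]
  have hcube : ∀ x : ℝ, (x - u)⁻¹ * ((x - u) ^ 2)⁻¹ = ((x - u) ^ 3)⁻¹ := fun x => by
    rw [← mul_inv, ← pow_succ']
  have hcs := sq_integral_mul_lt_of_forall_not_ae_eq_const_mul (μ := ν)
    (f := fun x => (x - u)⁻¹) (g := fun x => ((x - u) ^ 2)⁻¹)
  simp only [hsq, hfourth, hcube] at hcs
  refine hcs (integrable_inv_sub_pow hu 2) (integrable_inv_sub_pow hu 4)
    (integrable_inv_sub_pow hu 3) (integral_inv_sub_sq_pos hsupp hu) fun c hc => ?_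
  obtain ⟨x, hx, y, hy, hxy⟩ := hsupp
  obtain ⟨δ, hδ, hae⟩ := exists_pos_ae_le_abs_sub_of_notMem_msupport hu
  -- `t² = c t` with `t = (z - u)⁻¹ ≠ 0` forces `t = c`, i.e. `z = u + c⁻¹`.
  refine not_ae_eq_const_of_mem_msupport hx hy hxy (u + c⁻¹) ?_
  filter_upwards [hc, hae] with z hz hzδ
  have ht : (z - u)⁻¹ ≠ 0 := inv_ne_zero (abs_pos.1 (hδ.trans_le hzδ))
  have htc : (z - u)⁻¹ = c :=
    mul_right_cancel₀ ht (by rw [← sq, hsq]; exact hz)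
  rw [← htc, inv_inv]
  ring

end InverseMoments

theorem third_derivative_ineq_of_sq_lt_mul {a2 a3 a4 b2 b3 b4 : ℝ} (ha2 : 0 < a2)
    (ha : a3 ^ 2 < a2 * a4) (hb : b3 ^ 2 < b2 * b4) (h1 : a2 * b2 = 1)
    (h2 : (1 + a2) ^ 2 * b3 + b2 * (1 + b2) ^ 2 * a3 = 0) :
    2 * (1 + a2) ^ 4 * b3 ^ 2 < b2 * ((1 + a2) ^ 4 * b4 + (1 + b2) ^ 4 * a4) := by
  have hb2 : 0 < b2 := pos_of_mul_pos_right (h1 ▸ one_pos) ha2.le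
  have hsq : (1 + a2) ^ 4 * b3 ^ 2 = b2 ^ 2 * (1 + b2) ^ 4 * a3 ^ 2 := by
    linear_combination ((1 + a2) ^ 2 * b3 - b2 * (1 + b2) ^ 2 * a3) * h2
  have hA : (1 + a2) ^ 4 * b3 ^ 2 < (1 + a2) ^ 4 * (b2 * b4) :=
    mul_lt_mul_of_pos_left hb (by positivity)
  have hB : b2 ^ 2 * (1 + b2) ^ 4 * a3 ^ 2 < b2 ^ 2 * (1 + b2) ^ 4 * (a2 * a4) :=
    mul_lt_mul_of_pos_left ha (by positivity)
  have hC : b2 ^ 2 * (1 + b2) ^ 4 * (a2 * a4) = b2 * (1 + b2) ^ 4 * a4 := by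
    linear_combination (b2 * (1 + b2) ^ 4 * a4) * h1
  linarith

/-- negativity of the third derivative of the local inverse of the
subordination function when its first two derivatives vanish, expressed via the moments
`a_k = ∫ (x−u)⁻ᵏ dν`, `b_k = ∫ (x−v)⁻ᵏ dλ`. -/
theorem statement10 (ν lam : Measure ℝ)
    (hfinν : IsFiniteMeasure ν) (hfinlam : IsFiniteMeasure lam)
    (hsuppν : ∃ x ∈ msupport ν, ∃ y ∈ msupport ν, x ≠ y)
    (hsupplam : ∃ x ∈ msupport lam, ∃ y ∈ msupport lam, x ≠ y)
    (u v : ℝ) (hu : u ∉ msupport ν) (hv : v ∉ msupport lam)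
    (a2 a3 a4 b2 b3 b4 : ℝ)
    (ha2 : a2 = ∫ x, ((x - u) ^ 2)⁻¹ ∂ν)
    (ha3 : a3 = ∫ x, ((x - u) ^ 3)⁻¹ ∂ν)
    (ha4 : a4 = ∫ x, ((x - u) ^ 4)⁻¹ ∂ν)
    (hb2 : b2 = ∫ x, ((x - v) ^ 2)⁻¹ ∂lam)
    (hb3 : b3 = ∫ x, ((x - v) ^ 3)⁻¹ ∂lam)
    (hb4 : b4 = ∫ x, ((x - v) ^ 4)⁻¹ ∂lam)
    (h1 : a2 * b2 = 1)
    (h2 : (1 + a2) ^ 2 * b3 + b2 * (1 + b2) ^ 2 * a3 = 0) :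
    2 * (1 + a2) ^ 4 * b3 ^ 2 < b2 * ((1 + a2) ^ 4 * b4 + (1 + b2) ^ 4 * a4) := by
  subst ha2 ha3 ha4 hb2 hb3 hb4
  exact third_derivative_ineq_of_sq_lt_mul (integral_inv_sub_sq_pos hsuppν hu)
    (sq_integral_inv_sub_pow_three_lt hsuppν hu) (sq_integral_inv_sub_pow_three_lt hsupplam hv)
    h1 h2

end
end
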